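/- Let x_0, ..., x_n be affinely independent points in ℝ^n with convex hull σ, let f : ℝ^n → ℝ^n be twice continuously differentiable on a neighborhood of σ with all second partial derivatives of all components bounded in absolute value by β on σ, and let c_j = (n/2)·‖x_j − x_0‖₂·(max_k ‖x_k − x_0‖₂ + ‖x_j − x_0‖₂). Let v ∈ ℝ^n and let l ∈ ℝ^n be a vector with |v^{(k)}| ≤ l^{(k)} for each component k. Then for every x = Σ_j λ_j x_j ∈ σ (λ_j ≥ 0, Σ_j λ_j = 1): v · f(x) ≤ Σ_{j=0}^n λ_j (v · f(x_j)) + β · (1_n · l) · Σ_{j=0}^n λ_j c_j, where 1_n · l denotes the sum of the components of l. -/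

import Mathlib

/-!
Put `g = v · f`. On `σ` the Hessian entries of `g` are bounded by `β (1ₙ · l)`, so its Hessian
form is at most `β (1ₙ · l) n ‖d‖²` (Cauchy–Schwarz for `‖d‖₁`), and the second-order Taylor
remainder `R` of `g` at `x₀` satisfies `|R y| ≤ β (1ₙ · l) (n / 2) ‖y - x₀‖²`. The first-order part
of `g` at `x₀` is affine, hence commutes with convex combinations, so
`g x - Σ λⱼ g xⱼ = R x - Σ λⱼ R xⱼ`. Together with
`‖x - x₀‖² ≤ (Σ λⱼ ‖xⱼ - x₀‖) · maxₖ ‖xₖ - x₀‖` this gives exactly `β (1ₙ · l) Σ λⱼ cⱼ`.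
-/

open scoped BigOperators

/-- The second partial derivative `∂²φ/∂x^(q)∂x^(r)` of a scalar function on `ℝ^n`. -/
noncomputable def secondPartial {n : ℕ} (φ : EuclideanSpace ℝ (Fin n) → ℝ)
    (ξ : EuclideanSpace ℝ (Fin n)) (q r : Fin n) : ℝ :=
  fderiv ℝ (fun z => fderiv ℝ φ z (EuclideanSpace.single q (1 : ℝ))) ξ
    (EuclideanSpace.single r (1 : ℝ))

/-- The constant `c_j = (n/2)·‖x_j − x_0‖₂·(max_{k∈{1,…,n}} ‖x_k − x_0‖₂ + ‖x_j − x_0‖₂)`. -/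
noncomputable def simplexConst {n : ℕ} (x : Fin (n + 1) → EuclideanSpace ℝ (Fin n))
    (j : Fin (n + 1)) : ℝ :=
  ((n : ℝ) / 2) * ‖x j - x 0‖ * ((⨆ k : Fin n, ‖x k.succ - x 0‖) + ‖x j - x 0‖)

open Set Finset

theorem abs_sub_sub_mul_deriv_le_of_abs_deriv2_le {φ φ' φ'' : ℝ → ℝ} {a b B : ℝ} (hab : a ≤ b)
    (hφ : ∀ t ∈ Icc a b, HasDerivAt φ (φ' t) t)
    (hφ' : ∀ t ∈ Icc a b, HasDerivAt φ' (φ'' t) t)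
    (hB : ∀ t ∈ Icc a b, |φ'' t| ≤ B) :
    |φ b - φ a - (b - a) * φ' a| ≤ B / 2 * (b - a) ^ 2 := by
  have hslope : ∀ t ∈ Icc a b, ‖φ' t - φ' a‖ ≤ B * (t - a) :=
    norm_image_sub_le_of_norm_deriv_le_segment' (fun t ht => (hφ' t ht).hasDerivWithinAt)
      fun t ht => hB t (Ico_subset_Icc_self ht)
  have hrem : ∀ t ∈ Icc a b, HasDerivAt (fun s => φ s - φ a - (s - a) * φ' a) (φ' t - φ' a) t :=
    fun t ht => by
      simpa using ((hφ t ht).sub_const (φ a)).fun_sub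
        (((hasDerivAt_id' t).sub_const a).mul_const (φ' a))
  have hbound : ∀ t, HasDerivAt (fun s => B / 2 * (s - a) ^ 2) (B * (t - a)) t := fun t =>
    ((((hasDerivAt_id' t).sub_const a).fun_pow 2).const_mul (B / 2)).congr_deriv (by ring)
  simpa using image_norm_le_of_norm_deriv_right_le_deriv_boundary
    (fun t ht => (hrem t ht).continuousAt.continuousWithinAt)
    (fun t ht => (hrem t (Ico_subset_Icc_self ht)).hasDerivWithinAt) (by simp) hbound
    (fun t ht => hslope t (Ico_subset_Icc_self ht)) (right_mem_Icc.2 hab)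

theorem abs_sub_sub_fderiv_le_of_segment {E : Type*} [NormedAddCommGroup E] [NormedSpace ℝ E]
    {g : E → ℝ} {a b : E} (hg : ∀ z ∈ segment ℝ a b, ContDiffAt ℝ 2 g z) {B : ℝ}
    (hB : ∀ z ∈ segment ℝ a b, |fderiv ℝ (fderiv ℝ g) z (b - a) (b - a)| ≤ B) :
    |g b - g a - fderiv ℝ g a (b - a)| ≤ B / 2 := by
  set γ : ℝ → E := fun t => a + t • (b - a)
  have hγ : ∀ t, HasDerivAt γ (b - a) t := fun t => by
    simpa only [one_smul] using ((hasDerivAt_id' t).smul_const (b - a)).const_add a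
  have hγseg : ∀ t ∈ Icc (0 : ℝ) 1, γ t ∈ segment ℝ a b := fun t ht => by
    rw [segment_eq_image']; exact ⟨t, ht, rfl⟩
  have hg' : ∀ t ∈ Icc (0 : ℝ) 1, DifferentiableAt ℝ (fderiv ℝ g) (γ t) := fun t ht =>
    ((hg _ (hγseg t ht)).fderiv_right (m := 1) le_rfl).differentiableAt one_ne_zero
  have := abs_sub_sub_mul_deriv_le_of_abs_deriv2_le zero_le_one (φ := g ∘ γ)
    (φ' := fun t => fderiv ℝ g (γ t) (b - a))
    (φ'' := fun t => fderiv ℝ (fderiv ℝ g) (γ t) (b - a) (b - a))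
    (fun t ht => ((hg _ (hγseg t ht)).differentiableAt two_ne_zero).hasFDerivAt.comp_hasDerivAt t
      (hγ t))
    (fun t ht => by
      simpa using ((hg' t ht).hasFDerivAt.comp_hasDerivAt t (hγ t)).clm_apply
        (hasDerivAt_const t (b - a)))
    (fun t ht => hB _ (hγseg t ht))
  simpa [γ] using this

theorem secondPartial_eq_fderiv_fderiv {n : ℕ} {φ : EuclideanSpace ℝ (Fin n) → ℝ}
    {ξ : EuclideanSpace ℝ (Fin n)} (hφ : ContDiffAt ℝ 2 φ ξ) (q r : Fin n) :
    secondPartial φ ξ q r =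
      fderiv ℝ (fderiv ℝ φ) ξ (EuclideanSpace.single r 1) (EuclideanSpace.single q 1) := by
  have hφ' : DifferentiableAt ℝ (fderiv ℝ φ) ξ :=
    (hφ.fderiv_right (m := 1) le_rfl).differentiableAt one_ne_zero
  simp [secondPartial, fderiv_clm_apply hφ' (differentiableAt_const _)]

theorem fderiv_fderiv_clm_comp_apply {E F G : Type*} [NormedAddCommGroup E] [NormedSpace ℝ E]
    [NormedAddCommGroup F] [NormedSpace ℝ F] [NormedAddCommGroup G] [NormedSpace ℝ G]
    (L : F →L[ℝ] G) {f : E → F} {ξ : E} (hf : ContDiffAt ℝ 2 f ξ) (h k : E) :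
    fderiv ℝ (fderiv ℝ (L ∘ f)) ξ h k = L (fderiv ℝ (fderiv ℝ f) ξ h k) := by
  simpa [iteratedFDeriv_two_apply] using
    congrArg (fun T => T ![h, k]) (L.iteratedFDeriv_comp_left hf (i := 2) le_rfl)

theorem abs_fderiv_fderiv_sum_mul_le {E ι : Type*} [NormedAddCommGroup E] [NormedSpace ℝ E]
    [Fintype ι] {f : E → ι → ℝ} {ξ : E} (hf : ContDiffAt ℝ 2 f ξ) {v l : ι → ℝ}
    (hvl : ∀ k, |v k| ≤ l k) {β : ℝ} (h h' : E)
    (hβ : ∀ k, |fderiv ℝ (fderiv ℝ (fun z => f z k)) ξ h h'| ≤ β) :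
    |fderiv ℝ (fderiv ℝ (fun z => ∑ k, v k * f z k)) ξ h h'| ≤ β * ∑ k, l k := by
  set L : (ι → ℝ) →L[ℝ] ℝ := ∑ k, v k • ContinuousLinearMap.proj k
  have hL : ∀ w, L w = ∑ k, v k * w k := by simp [L]
  have hg : (fun z => ∑ k, v k * f z k) = L ∘ f := by ext z; simp [hL]
  have hcomp (k : ι) : fderiv ℝ (fderiv ℝ (fun z => f z k)) ξ h h' =
      fderiv ℝ (fderiv ℝ f) ξ h h' k :=
    fderiv_fderiv_clm_comp_apply (ContinuousLinearMap.proj k : (ι → ℝ) →L[ℝ] ℝ) hf h h'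
  rw [hg, fderiv_fderiv_clm_comp_apply L hf, hL]
  calc |∑ k, v k * fderiv ℝ (fderiv ℝ f) ξ h h' k|
      ≤ ∑ k, |v k| * |fderiv ℝ (fderiv ℝ f) ξ h h' k| := by
        simpa only [abs_mul] using
          abs_sum_le_sum_abs (fun k => v k * fderiv ℝ (fderiv ℝ f) ξ h h' k) univ
    _ ≤ ∑ k, l k * β := by
        gcongr with k
        · exact (abs_nonneg _).trans (hvl k)
        · exact hvl k
        · rw [← hcomp]; exact hβ k
    _ = β * ∑ k, l k := by rw [← sum_mul, mul_comm]

theorem abs_apply_apply_self_le {ι : Type*} [Fintype ι] [DecidableEq ι]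
    (L : EuclideanSpace ℝ ι →L[ℝ] EuclideanSpace ℝ ι →L[ℝ] ℝ) {M : ℝ}
    (hL : ∀ i j, |L (EuclideanSpace.single i 1) (EuclideanSpace.single j 1)| ≤ M)
    (d : EuclideanSpace ℝ ι) :
    |L d d| ≤ M * Fintype.card ι * ‖d‖ ^ 2 := by
  rcases isEmpty_or_nonempty ι with hι | ⟨⟨i₀⟩⟩
  · simp [Subsingleton.elim d 0]
  have hM : 0 ≤ M := (abs_nonneg _).trans (hL i₀ i₀)
  have hexpand : L d d = ∑ i, ∑ j, d i * d j *
      L (EuclideanSpace.single i 1) (EuclideanSpace.single j 1) := by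
    conv_lhs => rw [← (EuclideanSpace.basisFun ι ℝ).sum_repr d]
    simp only [EuclideanSpace.basisFun_repr, EuclideanSpace.basisFun_apply, map_sum, map_smul,
      _root_.sum_apply, _root_.smul_apply, smul_eq_mul, mul_sum]
    rw [sum_comm]
    exact sum_congr rfl fun i _ => sum_congr rfl fun j _ => by ring
  have hcs : (∑ i, |d i|) ^ 2 ≤ Fintype.card ι * ‖d‖ ^ 2 := by
    simpa [EuclideanSpace.norm_sq_eq] using
      sq_sum_le_card_mul_sum_sq (s := univ) (f := fun i => |d i|)
  calc |L d d| ≤ ∑ i, ∑ j, |d i| * |d j| * M := by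
        rw [hexpand]
        refine (abs_sum_le_sum_abs _ _).trans (sum_le_sum fun i _ => ?_)
        refine (abs_sum_le_sum_abs _ _).trans (sum_le_sum fun j _ => ?_)
        rw [abs_mul, abs_mul]
        exact mul_le_mul_of_nonneg_left (hL i j) (by positivity)
    _ = M * (∑ i, |d i|) ^ 2 := by
        rw [sq, sum_mul_sum, mul_comm, sum_mul]; simp only [sum_mul]
    _ ≤ M * Fintype.card ι * ‖d‖ ^ 2 := by
        rw [mul_assoc]; exact mul_le_mul_of_nonneg_left hcs hM

theorem norm_sub_le_iSup_norm_succ_sub {E : Type*} [SeminormedAddCommGroup E] {n : ℕ}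
    (x : Fin (n + 1) → E) (j : Fin (n + 1)) :
    ‖x j - x 0‖ ≤ ⨆ k : Fin n, ‖x k.succ - x 0‖ := by
  induction j using Fin.cases with
  | zero => simpa using Real.iSup_nonneg fun k : Fin n => norm_nonneg (x k.succ - x 0)
  | succ k =>
    exact le_ciSup (f := fun k : Fin n => ‖x k.succ - x 0‖) (Set.finite_range _).bddAbove k

theorem le_sum_mul_add_of_abs_remainder_le {ι E : Type*} [Fintype ι] [SeminormedAddCommGroup E]
    [NormedSpace ℝ E] {g : E → ℝ} (A : E →L[ℝ] ℝ) {a : E} {K μ : ℝ} (hK : 0 ≤ K)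
    {x : ι → E} {lam : ι → ℝ} (hlam0 : ∀ j, 0 ≤ lam j) (hlam1 : ∑ j, lam j = 1)
    (hμ : ∀ j, ‖x j - a‖ ≤ μ)
    (hR : ∀ y ∈ convexHull ℝ (range x), |g y - g a - A (y - a)| ≤ K * ‖y - a‖ ^ 2) :
    g (∑ j, lam j • x j) ≤
      ∑ j, lam j * g (x j) + K * ∑ j, lam j * (‖x j - a‖ * (μ + ‖x j - a‖)) := by
  set p := ∑ j, lam j • x j
  have hp : p ∈ convexHull ℝ (range x) := by
    simpa [centerMass_eq_of_sum_1 _ _ hlam1] using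
      centerMass_mem_convexHull (s := range x) univ (fun j _ => hlam0 j) (by simp [hlam1])
        fun j _ => mem_range_self j
  have hpa : p - a = ∑ j, lam j • (x j - a) := by
    simp [p, smul_sub, sum_sub_distrib, ← sum_smul, hlam1]
  have hsplit : g p - ∑ j, lam j * g (x j) = (g p - g a - A (p - a)) -
      ∑ j, lam j * (g (x j) - g a - A (x j - a)) := by
    simp only [mul_sub, sum_sub_distrib, ← sum_mul, hlam1, hpa, map_sum, map_smul, smul_eq_mul]
    ring
  have hnorm : ‖p - a‖ ≤ ∑ j, lam j * ‖x j - a‖ := by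
    rw [hpa]
    refine (norm_sum_le _ _).trans_eq (sum_congr rfl fun j _ => ?_)
    rw [norm_smul, Real.norm_of_nonneg (hlam0 j)]
  have hsq : ‖p - a‖ ^ 2 ≤ ∑ j, lam j * (‖x j - a‖ * μ) := by
    calc ‖p - a‖ ^ 2 = ‖p - a‖ * ‖p - a‖ := sq _
      _ ≤ (∑ j, lam j * ‖x j - a‖) * μ := by
        refine mul_le_mul hnorm (hnorm.trans ?_) (norm_nonneg _)
          (sum_nonneg fun j _ => mul_nonneg (hlam0 j) (norm_nonneg _))
        calc ∑ j, lam j * ‖x j - a‖ ≤ ∑ j, lam j * μ :=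
              sum_le_sum fun j _ => mul_le_mul_of_nonneg_left (hμ j) (hlam0 j)
          _ = μ := by rw [← sum_mul, hlam1, one_mul]
      _ = ∑ j, lam j * (‖x j - a‖ * μ) := by simp only [sum_mul, mul_assoc]
  have hRp := (abs_le.mp (hR p hp)).2
  have hRx : -∑ j, lam j * (g (x j) - g a - A (x j - a)) ≤
      ∑ j, lam j * (K * ‖x j - a‖ ^ 2) := by
    rw [← sum_neg_distrib]
    refine sum_le_sum fun j _ => ?_
    rw [← mul_neg]
    exact mul_le_mul_of_nonneg_left
      (neg_le.mp (neg_le_of_abs_le (hR _ (subset_convexHull ℝ _ ⟨j, rfl⟩)))) (hlam0 j)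
  have hexpand : K * ∑ j, lam j * (‖x j - a‖ * (μ + ‖x j - a‖)) =
      K * ∑ j, lam j * (‖x j - a‖ * μ) + ∑ j, lam j * (K * ‖x j - a‖ ^ 2) := by
    rw [mul_sum, mul_sum, ← sum_add_distrib]
    exact sum_congr rfl fun j _ => by ring
  linarith [mul_le_mul_of_nonneg_left hsq hK]

theorem dot_vectorField_bound_general (n : ℕ) (x : Fin (n + 1) → EuclideanSpace ℝ (Fin n))
    (f : EuclideanSpace ℝ (Fin n) → (Fin n → ℝ)) (β : ℝ)
    (U : Set (EuclideanSpace ℝ (Fin n))) (hU : IsOpen U)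
    (hσU : convexHull ℝ (Set.range x) ⊆ U)
    (hf : ContDiffOn ℝ 2 f U)
    (hβ : ∀ ξ ∈ convexHull ℝ (Set.range x), ∀ p q r : Fin n,
      |secondPartial (fun z => f z p) ξ q r| ≤ β)
    (v l : Fin n → ℝ) (hvl : ∀ k, |v k| ≤ l k)
    (lam : Fin (n + 1) → ℝ) (hlam0 : ∀ j, 0 ≤ lam j) (hlam1 : ∑ j, lam j = 1) :
    (∑ k, v k * f (∑ j, lam j • x j) k) ≤
      (∑ j, lam j * (∑ k, v k * f (x j) k)) +
        β * (∑ k, l k) * ∑ j, lam j * simplexConst x j := by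
  set σ := convexHull ℝ (Set.range x)
  set g : EuclideanSpace ℝ (Fin n) → ℝ := fun z => ∑ k, v k * f z k
  have hx0 : x 0 ∈ σ := subset_convexHull ℝ _ (Set.mem_range_self 0)
  have hfσ : ∀ z ∈ σ, ContDiffAt ℝ 2 f z := fun z hz => hf.contDiffAt (hU.mem_nhds (hσU hz))
  have hgσ : ∀ z ∈ σ, ContDiffAt ℝ 2 g z := fun z hz =>
    ContDiffAt.sum fun k _ => contDiffAt_const.mul (contDiffAt_pi.mp (hfσ z hz) k)
  have hHess : ∀ ξ ∈ σ, ∀ i j : Fin n, |fderiv ℝ (fderiv ℝ g) ξ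
      (EuclideanSpace.single i 1) (EuclideanSpace.single j 1)| ≤ β * ∑ k, l k :=
    fun ξ hξ i j => abs_fderiv_fderiv_sum_mul_le (hfσ ξ hξ) hvl _ _ fun k => by
      rw [← secondPartial_eq_fderiv_fderiv (contDiffAt_pi.mp (hfσ ξ hξ) k)]
      exact hβ ξ hξ k j i
  have hK : 0 ≤ β * (∑ k, l k) * n / 2 := by
    rcases Nat.eq_zero_or_pos n with rfl | hn
    · simp
    have hβ0 : 0 ≤ β := (abs_nonneg _).trans (hβ _ hx0 ⟨0, hn⟩ ⟨0, hn⟩ ⟨0, hn⟩)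
    have hl : 0 ≤ ∑ k, l k := sum_nonneg fun k _ => (abs_nonneg (v k)).trans (hvl k)
    exact div_nonneg (mul_nonneg (mul_nonneg hβ0 hl) n.cast_nonneg) zero_le_two
  have hR : ∀ y ∈ σ, |g y - g (x 0) - fderiv ℝ g (x 0) (y - x 0)| ≤
      β * (∑ k, l k) * n / 2 * ‖y - x 0‖ ^ 2 := fun y hy => by
    have hseg := (convex_convexHull ℝ _).segment_subset hx0 hy
    refine (abs_sub_sub_fderiv_le_of_segment (fun z hz => hgσ z (hseg hz))
      fun z hz => abs_apply_apply_self_le _ (hHess z (hseg hz)) _).trans_eq ?_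
    simp only [Fintype.card_fin]
    ring
  refine (le_sum_mul_add_of_abs_remainder_le _ hK hlam0 hlam1
    (norm_sub_le_iSup_norm_succ_sub x) hR).trans_eq ?_
  rw [mul_sum _ _ (β * (∑ k, l k) * n / 2), mul_sum _ _ (β * ∑ k, l k)]
  exact congrArg _ (sum_congr rfl fun j _ => by rw [simplexConst]; ring)

/-- bound on `v · f(x)` over a simplex:
`v · f(x) ≤ Σ_j λ_j (v · f(x_j)) + β (1_n·l) Σ_j λ_j c_j`. -/
theorem dot_vectorField_bound (n : ℕ) (x : Fin (n + 1) → EuclideanSpace ℝ (Fin n))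
    (hx : LinearIndependent ℝ (fun k : Fin n => x k.succ - x 0))
    (f : EuclideanSpace ℝ (Fin n) → (Fin n → ℝ)) (β : ℝ)
    (U : Set (EuclideanSpace ℝ (Fin n))) (hU : IsOpen U)
    (hσU : convexHull ℝ (Set.range x) ⊆ U)
    (hf : ContDiffOn ℝ 2 f U)
    (hβ : ∀ ξ ∈ convexHull ℝ (Set.range x), ∀ p q r : Fin n,
      |secondPartial (fun z => f z p) ξ q r| ≤ β)
    (v l : Fin n → ℝ) (hvl : ∀ k, |v k| ≤ l k)
    (lam : Fin (n + 1) → ℝ) (hlam0 : ∀ j, 0 ≤ lam j) (hlam1 : ∑ j, lam j = 1) :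
    (∑ k, v k * f (∑ j, lam j • x j) k) ≤
      (∑ j, lam j * (∑ k, v k * f (x j) k)) +
        β * (∑ k, l k) * ∑ j, lam j * simplexConst x j :=
  dot_vectorField_bound_general n x f β U hU hσU hf hβ v l hvl lam hlam0 hlam1
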